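/- Proposition 2 (alignment with ETF prototypes): if the prototypes w_1, …, w_k form a simplex equiangular tight frame, then for every label y ∈ {1,…,k} and every h ∈ E with ‖h‖ ≤ 1, one has L_y(h) ≥ L_y(w_y); that is, the prototype w_y is a global minimizer of the limiting per-sample loss over the closed unit ball. -/

import Mathlib

open scoped RealInnerProductSpace

/-- The limiting per-sample loss
`L_y(h) = log( Σ_c exp⟪w_c, h⟫ ) − 2⟪w_y, h⟫`. -/
noncomputable def limitLoss {d k : ℕ} (w : Fin k → EuclideanSpace ℝ (Fin d)) (y : Fin k)
    (h : EuclideanSpace ℝ (Fin d)) : ℝ :=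
  Real.log (∑ c : Fin k, Real.exp ⟪w c, h⟫) - 2 * ⟪w y, h⟫

/-!
The ETF prototypes sum to zero, so for `s = ⟪w_y, h⟫` the other `k - 1` logits sum to `-s`, and
by Jensen their exponentials sum to at least `(k - 1) e^{-s/(k-1)}`. Hence
`L_y(h) ≥ log (e^s + (k - 1) e^{-s/(k-1)}) - 2s`, with equality at `h = w_y`, where `s = 1`.
For `s ≤ 1` each of the two terms of the argument of `log` is at least `e^{2(s-1)}` times its
value at `s = 1`, so the bound is smallest at `s = 1`.
-/

open Finset

section SimplexETF

variable {ι E : Type*} [Fintype ι] [NormedAddCommGroup E] [InnerProductSpace ℝ E]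

def IsSimplexETF (w : ι → E) : Prop :=
  (∀ c, ‖w c‖ = 1) ∧
    ∀ c c', c ≠ c' → ⟪w c, w c'⟫ = -1 / ((Fintype.card ι : ℝ) - 1)

variable [DecidableEq ι] [Nontrivial ι] {w : ι → E}

theorem IsSimplexETF.inner_sum_eq_zero (hw : IsSimplexETF w) (c : ι) :
    ⟪w c, ∑ c', w c'⟫ = 0 := by
  have hn : (1 : ℝ) < Fintype.card ι := by exact_mod_cast Fintype.one_lt_card
  have hothers : ∑ c' ∈ univ.erase c, ⟪w c, w c'⟫ = -1 := by
    rw [sum_congr rfl fun c' hc' => hw.2 c c' (ne_of_mem_erase hc').symm, sum_const,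
      card_erase_of_mem (mem_univ c), card_univ, nsmul_eq_mul,
      Nat.cast_sub Fintype.card_pos, Nat.cast_one]
    field_simp [(sub_pos.2 hn).ne']
  rw [inner_sum, ← add_sum_erase _ _ (mem_univ c), hothers, real_inner_self_eq_norm_sq, hw.1 c]
  norm_num

theorem IsSimplexETF.sum_eq_zero (hw : IsSimplexETF w) : ∑ c, w c = 0 := by
  rw [← inner_self_eq_zero (𝕜 := ℝ), sum_inner]
  exact Finset.sum_eq_zero fun c _ => hw.inner_sum_eq_zero c

end SimplexETF

theorem card_mul_exp_sum_div_card_le_sum_exp {ι : Type*} (s : Finset ι) (x : ι → ℝ) :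
    #s * Real.exp ((∑ i ∈ s, x i) / #s) ≤ ∑ i ∈ s, Real.exp (x i) := by
  rcases s.eq_empty_or_nonempty with rfl | hs
  · simp
  have hcard : (0 : ℝ) < #s := by exact_mod_cast hs.card_pos
  have jensen := convexOn_exp.map_sum_le (t := s) (w := fun _ => (#s : ℝ)⁻¹) (p := x)
    (fun _ _ => by positivity) (by simp [hcard.ne']) (fun _ _ => Set.mem_univ _)
  simp only [smul_eq_mul, ← mul_sum] at jensen
  rw [div_eq_inv_mul]
  simpa only [mul_inv_cancel_left₀ hcard.ne'] using mul_le_mul_of_nonneg_left jensen hcard.le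

noncomputable def etfLossProfile (m s : ℝ) : ℝ :=
  Real.log (Real.exp s + m * Real.exp (-s / m)) - 2 * s

theorem etfLossProfile_one_le {m s : ℝ} (hm : 0 ≤ m) (hs : s ≤ 1) :
    etfLossProfile m 1 ≤ etfLossProfile m s := by
  have hself : Real.exp (2 * (s - 1)) * Real.exp 1 ≤ Real.exp s := by
    rw [← Real.exp_add]
    exact Real.exp_le_exp.2 (by linarith)
  have hothers : Real.exp (2 * (s - 1)) * Real.exp (-1 / m) ≤ Real.exp (-s / m) := by
    rw [← Real.exp_add, Real.exp_le_exp]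
    have : (s - 1) * (2 + m⁻¹) ≤ 0 :=
      mul_nonpos_of_nonpos_of_nonneg (by linarith) (by positivity)
    rw [neg_div, neg_div, div_eq_mul_inv, div_eq_mul_inv]
    linarith
  have hscaled : Real.exp (2 * (s - 1)) * (Real.exp 1 + m * Real.exp (-1 / m)) ≤
      Real.exp s + m * Real.exp (-s / m) := by
    nlinarith [mul_le_mul_of_nonneg_left hothers hm]
  have hpos : 0 < Real.exp 1 + m * Real.exp (-1 / m) := by positivity
  have hlog := Real.log_le_log (by positivity) hscaled
  rw [Real.log_mul (Real.exp_ne_zero _) hpos.ne', Real.log_exp] at hlog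
  unfold etfLossProfile
  linarith

variable {d k : ℕ} {w : Fin k → EuclideanSpace ℝ (Fin d)}

theorem cast_card_univ_erase_fin (y : Fin k) : (#(univ.erase y) : ℝ) = (k : ℝ) - 1 := by
  rw [card_erase_of_mem (mem_univ y), card_univ, Fintype.card_fin,
    Nat.cast_sub (Nat.one_le_of_lt y.isLt), Nat.cast_one]

theorem cast_sub_one_nonneg_of_fin (y : Fin k) : (0 : ℝ) ≤ (k : ℝ) - 1 :=
  cast_card_univ_erase_fin y ▸ Nat.cast_nonneg _

theorem etfLossProfile_le_limitLoss (hw : ∑ c, w c = 0) (y : Fin k)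
    (h : EuclideanSpace ℝ (Fin d)) :
    etfLossProfile ((k : ℝ) - 1) ⟪w y, h⟫ ≤ limitLoss w y h := by
  have hothers : ∑ c ∈ univ.erase y, ⟪w c, h⟫ = -⟪w y, h⟫ := by
    have htotal : ∑ c, ⟪w c, h⟫ = 0 := by rw [← sum_inner, hw, inner_zero_left]
    rw [← add_sum_erase _ _ (mem_univ y)] at htotal
    linarith
  have hjensen := card_mul_exp_sum_div_card_le_sum_exp (univ.erase y) fun c => ⟪w c, h⟫
  rw [cast_card_univ_erase_fin, hothers] at hjensen
  have := cast_sub_one_nonneg_of_fin y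
  unfold etfLossProfile limitLoss
  rw [← add_sum_erase _ _ (mem_univ y)]
  gcongr

theorem limitLoss_self_of_isSimplexETF (hw : IsSimplexETF w) (y : Fin k) :
    limitLoss w y (w y) = etfLossProfile ((k : ℝ) - 1) 1 := by
  have hself : ⟪w y, w y⟫ = 1 := by rw [real_inner_self_eq_norm_sq, hw.1 y, one_pow]
  have hothers : ∑ c ∈ univ.erase y, Real.exp ⟪w c, w y⟫ =
      ((k : ℝ) - 1) * Real.exp (-1 / ((k : ℝ) - 1)) := by
    rw [sum_congr rfl fun c hc => by rw [hw.2 c y (ne_of_mem_erase hc), Fintype.card_fin],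
      sum_const, nsmul_eq_mul, cast_card_univ_erase_fin]
  rw [limitLoss, etfLossProfile, ← add_sum_erase _ _ (mem_univ y), hothers, hself]

theorem etf_prototype_global_minimizer_general (d k : ℕ) (hk : 2 ≤ k)
    (w : Fin k → EuclideanSpace ℝ (Fin d)) (hw : ∀ c, ‖w c‖ = 1)
    (hetf : ∀ c c' : Fin k, c ≠ c' → ⟪w c, w c'⟫ = -1 / ((k : ℝ) - 1)) :
    ∀ y : Fin k, ∀ h : EuclideanSpace ℝ (Fin d), ‖h‖ ≤ 1 →
      limitLoss w y h ≥ limitLoss w y (w y) := by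
  intro y h hh
  have : Nontrivial (Fin k) := Fin.nontrivial_iff_two_le.2 hk
  have hETF : IsSimplexETF w := ⟨hw, by simpa only [Fintype.card_fin] using hetf⟩
  have hs : ⟪w y, h⟫ ≤ 1 := (real_inner_le_norm (w y) h).trans (by rwa [hw y, one_mul])
  calc limitLoss w y (w y) = etfLossProfile ((k : ℝ) - 1) 1 :=
        limitLoss_self_of_isSimplexETF hETF y
    _ ≤ etfLossProfile ((k : ℝ) - 1) ⟪w y, h⟫ :=
        etfLossProfile_one_le (cast_sub_one_nonneg_of_fin y) hs
    _ ≤ limitLoss w y h := etfLossProfile_le_limitLoss hETF.sum_eq_zero y h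

/-- **Proposition 2 (alignment with ETF prototypes).** If the unit-norm prototypes
`w_1, …, w_k` form a simplex equiangular tight frame (`⟪w_c, w_{c'}⟫ = −1/(k−1)` for `c ≠ c'`),
then for every label `y` and every `h` with `‖h‖ ≤ 1`, `L_y(h) ≥ L_y(w_y)`: the prototype `w_y`
is a global minimizer of the limiting per-sample loss over the closed unit ball. -/
theorem etf_prototype_global_minimizer (d k : ℕ) (hd : 0 < d) (hk : 2 ≤ k)
    (w : Fin k → EuclideanSpace ℝ (Fin d)) (hw : ∀ c, ‖w c‖ = 1)
    (hetf : ∀ c c' : Fin k, c ≠ c' → ⟪w c, w c'⟫ = -1 / ((k : ℝ) - 1)) :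
    ∀ y : Fin k, ∀ h : EuclideanSpace ℝ (Fin d), ‖h‖ ≤ 1 →
      limitLoss w y h ≥ limitLoss w y (w y) :=
  etf_prototype_global_minimizer_general d k hk w hw hetf
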